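/- arXiv:math/0010194 — 5 statements merged into one kernel-verified Lean document; each statement's English description precedes it below -/
import Mathlib

section
/- Let F(x_1,...,x_n) be a quasi-symmetric polynomial in n variables over F_{q^n}, i.e., F is fixed by the cyclic permutation of variables x_1 → x_2 → ... → x_n → x_1. Let f(t) = F(t, t^q, t^{q^2}, ..., t^{q^{n-1}}) ∈ F_{q^n}[t]. Then f(t^q) ≡ f(t) modulo the polynomial t^{q^n} − t. -/
/-! Modulo `t^{q^n} - t`, substituting `t ↦ t^q` sends `t^{q^i}` to `t^{q^{i+1}}` and `t^{q^{n-1}}`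
to `t^{q^n} ≡ t`, i.e. it cyclically shifts the arguments `t^{q^i}` of `F`. Since `F` is invariant
under that shift, `f(t^q) ≡ f(t)`. -/

namespace MvPolynomial

theorem algHom_aeval_eq_of_rename_eq {σ R A B : Type*} [CommSemiring R]
    [CommSemiring A] [CommSemiring B] [Algebra R A] [Algebra R B]
    {e : σ → σ} {F : MvPolynomial σ R} (hF : rename e F = F) (φ ψ : A →ₐ[R] B) (g : σ → A)
    (hg : ∀ i, φ (g i) = ψ (g (e i))) :
    φ (aeval g F) = ψ (aeval g F) := by
  calc φ (aeval g F) = aeval (ψ ∘ g ∘ e) F := by simp only [comp_aeval_apply, hg]; rfl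
    _ = aeval (ψ ∘ g) (rename e F) := by rw [aeval_rename]; rfl
    _ = ψ (aeval g F) := by rw [hF, comp_aeval_apply]; rfl

end MvPolynomial

open Polynomial

theorem X_pow_pow_sub_X_dvd_X_pow_pow_succ_sub_finRotate {R : Type*} [CommRing R] (q : ℕ) :
    ∀ {n : ℕ} (i : Fin n),
      (X ^ q ^ n - X : R[X]) ∣ X ^ q ^ ((i : ℕ) + 1) - X ^ q ^ (finRotate n i : ℕ)
  | n + 1, i => by
    rw [coe_finRotate]
    split_ifs with hi
    · simp [hi]
    · simp

theorem quasiSymmetric_eval_frobenius_congruent_general (q n : ℕ)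
    (K : Type*) [Field K]
    (F : MvPolynomial (Fin n) K) (hF : MvPolynomial.rename (finRotate n) F = F) :
    (Polynomial.X ^ q ^ n - Polynomial.X : Polynomial K) ∣
      ((MvPolynomial.aeval fun i : Fin n => (Polynomial.X : Polynomial K) ^ q ^ (i : ℕ)) F).comp
          (Polynomial.X ^ q)
        - (MvPolynomial.aeval fun i : Fin n => (Polynomial.X : Polynomial K) ^ q ^ (i : ℕ)) F := by
  set I : Ideal K[X] := Ideal.span {(X ^ q ^ n - X : K[X])}
  rw [← Ideal.mem_span_singleton, ← Ideal.Quotient.eq, comp_eq_aeval]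
  refine MvPolynomial.algHom_aeval_eq_of_rename_eq hF
    ((Ideal.Quotient.mkₐ K I).comp (aeval (X ^ q : K[X]))) (Ideal.Quotient.mkₐ K I) _ fun i => ?_
  have hshift : aeval (X ^ q : K[X]) (X ^ q ^ (i : ℕ) : K[X]) = X ^ q ^ ((i : ℕ) + 1) := by
    rw [map_pow, aeval_X, ← pow_mul, pow_succ']
  rw [AlgHom.comp_apply, hshift, Ideal.Quotient.mkₐ_eq_mk,
    Ideal.Quotient.eq, Ideal.mem_span_singleton]
  exact X_pow_pow_sub_X_dvd_X_pow_pow_succ_sub_finRotate q i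

/-- Let `F(x₁,…,xₙ)` be a quasi-symmetric polynomial over `F_{q^n}` (fixed
by the cyclic permutation of the variables) and `f(t) = F(t, t^q, …, t^{q^{n-1}})`. Then
`f(t^q) ≡ f(t) mod (t^{q^n} - t)`. -/
theorem quasiSymmetric_eval_frobenius_congruent (q n : ℕ) (hq : IsPrimePow q) (hn : 1 ≤ n)
    (K : Type*) [Field K] [Fintype K] (hK : Fintype.card K = q ^ n)
    (F : MvPolynomial (Fin n) K) (hF : MvPolynomial.rename (finRotate n) F = F) :
    (Polynomial.X ^ q ^ n - Polynomial.X : Polynomial K) ∣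
      ((MvPolynomial.aeval fun i : Fin n => (Polynomial.X : Polynomial K) ^ q ^ (i : ℕ)) F).comp
          (Polynomial.X ^ q)
        - (MvPolynomial.aeval fun i : Fin n => (Polynomial.X : Polynomial K) ^ q ^ (i : ℕ)) F :=
  quasiSymmetric_eval_frobenius_congruent_general q n K F hF
end

section
/- Let f(t) ∈ F_{q^n}[t] have degree less than q^n. Then f(t) is (n,q)-quasi-symmetric (i.e., f(t) = F(t, t^q, ..., t^{q^{n-1}}) for some quasi-symmetric polynomial F in n variables over F_{q^n}) if and only if f(t^q) ≡ f(t) modulo the polynomial t^{q^n} − t. -/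
/-!
Put `N = q ^ n`. Modulo `X ^ N - X` the substitution `X ↦ X ^ q` acts on the generators
`X ^ q ^ i` of a lift as the cyclic shift of the variables, because `X ^ q ^ n ≡ X`; this gives
the forward direction. Conversely, writing each exponent `k < N` in base `q` gives a canonical lift
of `f` supported on monomials with all exponents `< q`. These monomials evaluate to the distinct
powers `X ^ k`, `k < N`, and are permuted by the cyclic shift, so if `f(X ^ q) ≡ f` then the
shifted lift evaluates to a polynomial of degree `< N` congruent to, hence equal to, `f`; by
injectivity of evaluation on such polynomials the lift is quasi-symmetric.
-/

open Polynomial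

section

variable {K : Type*} [CommRing K] {q n : ℕ}

theorem Polynomial.eq_zero_of_X_pow_sub_X_dvd {N : ℕ} {p : K[X]} (hp : p.degree < N)
    (h : (X ^ N - X : K[X]) ∣ p) : p = 0 := by
  nontriviality K
  rcases Nat.lt_or_ge 1 N with hN | hN
  · have hX : (X : K[X]).degree < N := degree_X_le.trans_lt (by exact_mod_cast hN)
    have hmonic : (X ^ N - X : K[X]).Monic := monic_X_pow_sub hX
    have hdeg : (X ^ N - X : K[X]).degree = N := by
      rw [degree_sub_eq_left_of_degree_lt (by rwa [degree_X_pow]), degree_X_pow]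
    rw [← (modByMonic_eq_self_iff hmonic (p := p)).2 (hdeg ▸ hp)]
    exact (modByMonic_eq_zero_iff_dvd hmonic).2 h
  · interval_cases N
    · simpa using hp
    · simpa using h

theorem MvPolynomial.dvd_aeval_sub_aeval {σ S : Type*} [CommRing S] [Algebra K S] {a : S}
    {v w : σ → S} (h : ∀ i, a ∣ v i - w i) (p : MvPolynomial σ K) :
    a ∣ aeval v p - aeval w p := by
  rw [← Ideal.mem_span_singleton, ← Ideal.Quotient.eq, ← Ideal.Quotient.mkₐ_eq_mk K,
    comp_aeval_apply, comp_aeval_apply]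
  congr 2 with i
  rw [Ideal.Quotient.mkₐ_eq_mk, Ideal.Quotient.eq, Ideal.mem_span_singleton]
  exact h i

variable (K q n) in
noncomputable abbrev qPowersOfX : Fin n → K[X] :=
  fun i => X ^ q ^ (i : ℕ)

theorem X_pow_sub_X_dvd_X_pow_pow_finRotate_sub (i : Fin n) :
    (X ^ q ^ n - X : K[X]) ∣ X ^ q ^ (finRotate n i : ℕ) - X ^ q ^ ((i : ℕ) + 1) := by
  cases n with
  | zero => exact i.elim0
  | succ m =>
    rw [coe_finRotate]
    split_ifs with hi
    · rw [hi, Fin.val_last, pow_zero, pow_one, dvd_sub_comm]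
    · rw [sub_self]
      exact dvd_zero _

theorem X_pow_sub_X_dvd_aeval_rename_finRotate_sub_comp (G : MvPolynomial (Fin n) K) :
    (X ^ q ^ n - X : K[X]) ∣
      MvPolynomial.aeval (qPowersOfX K q n) (MvPolynomial.rename (finRotate n) G) -
        (MvPolynomial.aeval (qPowersOfX K q n) G).comp (X ^ q) := by
  rw [MvPolynomial.aeval_rename, comp_eq_aeval, MvPolynomial.comp_aeval_apply]
  refine MvPolynomial.dvd_aeval_sub_aeval (fun i => ?_) G
  rw [Function.comp_apply, qPowersOfX, map_pow, aeval_X, ← pow_mul, ← pow_succ']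
  exact X_pow_sub_X_dvd_X_pow_pow_finRotate_sub i

noncomputable def digitExponent (d : Fin n → Fin q) : Fin n →₀ ℕ :=
  Finsupp.equivFunOnFinite.symm fun i => d i

noncomputable def ofDigitCoeffs (c : (Fin n → Fin q) → K) : MvPolynomial (Fin n) K :=
  ∑ d, MvPolynomial.monomial (digitExponent d) (c d)

theorem mapDomain_digitExponent (σ : Equiv.Perm (Fin n)) (d : Fin n → Fin q) :
    (digitExponent d).mapDomain σ = digitExponent (d ∘ σ.symm) := by
  ext i
  simp [digitExponent, Finsupp.mapDomain_equiv_apply]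

theorem rename_ofDigitCoeffs (σ : Equiv.Perm (Fin n)) (c : (Fin n → Fin q) → K) :
    MvPolynomial.rename σ (ofDigitCoeffs c) = ofDigitCoeffs fun d => c (d ∘ σ) := by
  simp only [ofDigitCoeffs, map_sum, MvPolynomial.rename_monomial, mapDomain_digitExponent]
  refine Fintype.sum_equiv (σ.arrowCongr (Equiv.refl _)) _ _ fun d => ?_
  change _ = MvPolynomial.monomial (digitExponent (d ∘ σ.symm)) (c (d ∘ σ.symm ∘ σ))
  rw [σ.symm_comp_self, Function.comp_id]

theorem aeval_monomial_digitExponent (d : Fin n → Fin q) (a : K) :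
    MvPolynomial.aeval (qPowersOfX K q n)
        (MvPolynomial.monomial (digitExponent d) a) =
      C a * X ^ (finFunctionFinEquiv d : ℕ) := by
  rw [MvPolynomial.aeval_monomial, Finsupp.prod_fintype _ _ fun _ => pow_zero _]
  simp [digitExponent, ← pow_mul, Finset.prod_pow_eq_pow_sum, mul_comm]

theorem coeff_aeval_ofDigitCoeffs (c : (Fin n → Fin q) → K) (k : ℕ) :
    (MvPolynomial.aeval (qPowersOfX K q n) (ofDigitCoeffs c)).coeff k =
      if h : k < q ^ n then c (finFunctionFinEquiv.symm ⟨k, h⟩) else 0 := by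
  simp only [ofDigitCoeffs, map_sum, aeval_monomial_digitExponent, finsetSum_coeff,
    coeff_C_mul_X_pow]
  rw [← finFunctionFinEquiv.symm.sum_comp]
  simp_rw [Equiv.apply_symm_apply]
  split_ifs with hk
  · rw [Fintype.sum_eq_single ⟨k, hk⟩ fun i hi => if_neg fun h => hi (Fin.ext h.symm),
      if_pos rfl]
  · exact Finset.sum_eq_zero fun i _ => if_neg fun h : k = i => hk (h ▸ i.is_lt)

theorem degree_aeval_ofDigitCoeffs_lt (c : (Fin n → Fin q) → K) :
    (MvPolynomial.aeval (qPowersOfX K q n) (ofDigitCoeffs c)).degree < (q ^ n : ℕ) :=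
  (degree_lt_iff_coeff_zero _ _).2 fun k hk => by
    rw [coeff_aeval_ofDigitCoeffs, dif_neg (not_lt.2 hk)]

theorem aeval_ofDigitCoeffs_coeff {f : K[X]} (hf : f.natDegree < q ^ n) :
    MvPolynomial.aeval (qPowersOfX K q n)
        (ofDigitCoeffs fun d : Fin n → Fin q => f.coeff (finFunctionFinEquiv d)) = f := by
  ext k
  rw [coeff_aeval_ofDigitCoeffs]
  split_ifs with hk
  · rw [Equiv.apply_symm_apply]
  · exact (coeff_eq_zero_of_natDegree_lt (hf.trans_le (not_lt.1 hk))).symm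

theorem aeval_ofDigitCoeffs_injective :
    Function.Injective fun c : (Fin n → Fin q) → K =>
      MvPolynomial.aeval (qPowersOfX K q n) (ofDigitCoeffs c) := by
  intro c c' h
  funext d
  have := congrArg (coeff · (finFunctionFinEquiv d : ℕ)) h
  simpa only [coeff_aeval_ofDigitCoeffs, dif_pos (finFunctionFinEquiv d).is_lt, Fin.eta,
    Equiv.symm_apply_apply] using this

theorem exists_rename_finRotate_eq_and_aeval_eq_of_dvd {f : K[X]} (hf : f.natDegree < q ^ n)
    (h : (X ^ q ^ n - X : K[X]) ∣ f.comp (X ^ q) - f) :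
    ∃ F : MvPolynomial (Fin n) K, MvPolynomial.rename (finRotate n) F = F ∧
      MvPolynomial.aeval (qPowersOfX K q n) F = f := by
  set F : MvPolynomial (Fin n) K :=
    ofDigitCoeffs fun d : Fin n → Fin q => f.coeff (finFunctionFinEquiv d)
  have hF : MvPolynomial.aeval (qPowersOfX K q n) F = f := aeval_ofDigitCoeffs_coeff hf
  refine ⟨F, ?_, hF⟩
  have hrot : MvPolynomial.aeval (qPowersOfX K q n) (MvPolynomial.rename (finRotate n) F) = f := by
    rw [← sub_eq_zero]
    refine eq_zero_of_X_pow_sub_X_dvd (N := q ^ n) ?_ ?_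
    · refine (degree_sub_le _ _).trans_lt (max_lt ?_ ?_)
      · rw [rename_ofDigitCoeffs]
        exact degree_aeval_ofDigitCoeffs_lt _
      · exact (degree_le_natDegree).trans_lt (by exact_mod_cast hf)
    · have hshift := X_pow_sub_X_dvd_aeval_rename_finRotate_sub_comp (q := q) F
      rw [hF] at hshift
      simpa only [sub_add_sub_cancel] using dvd_add hshift h
  rw [rename_ofDigitCoeffs] at hrot ⊢
  exact congrArg ofDigitCoeffs (aeval_ofDigitCoeffs_injective (hrot.trans hF.symm))

end

theorem quasiSymmetric_iff_frobenius_congruent_general (q n : ℕ)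
    (K : Type*) [Field K]
    (f : Polynomial K) (hdeg : f.natDegree < q ^ n) :
    (∃ F : MvPolynomial (Fin n) K, MvPolynomial.rename (finRotate n) F = F ∧
        (MvPolynomial.aeval fun i : Fin n => (Polynomial.X : Polynomial K) ^ q ^ (i : ℕ)) F = f)
      ↔ (Polynomial.X ^ q ^ n - Polynomial.X : Polynomial K) ∣
          f.comp (Polynomial.X ^ q) - f := by
  refine ⟨?_, exists_rename_finRotate_eq_and_aeval_eq_of_dvd hdeg⟩
  rintro ⟨F, hF, rfl⟩
  have hshift := X_pow_sub_X_dvd_aeval_rename_finRotate_sub_comp (q := q) F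
  rwa [hF, dvd_sub_comm] at hshift

/-- A polynomial `f(t) ∈ F_{q^n}[t]` of degree `< q^n` is
`(n,q)`-quasi-symmetric (i.e. `f(t) = F(t, t^q, …, t^{q^{n-1}})` for some polynomial `F` in
`n` variables fixed by the cyclic permutation of the variables) if and only if
`f(t^q) ≡ f(t) mod (t^{q^n} - t)`. -/
theorem quasiSymmetric_iff_frobenius_congruent (q n : ℕ) (hq : IsPrimePow q) (hn : 1 ≤ n)
    (K : Type*) [Field K] [Fintype K] (hK : Fintype.card K = q ^ n)
    (f : Polynomial K) (hdeg : f.natDegree < q ^ n) :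
    (∃ F : MvPolynomial (Fin n) K, MvPolynomial.rename (finRotate n) F = F ∧
        (MvPolynomial.aeval fun i : Fin n => (Polynomial.X : Polynomial K) ^ q ^ (i : ℕ)) F = f)
      ↔ (Polynomial.X ^ q ^ n - Polynomial.X : Polynomial K) ∣
          f.comp (Polynomial.X ^ q) - f :=
  quasiSymmetric_iff_frobenius_congruent_general q n K f hdeg
end

section
/- Let f(t) ∈ F_{q^n}[t] have degree less than q^n. Then f(t) is (n,q)-quasi-symmetric (i.e., f(t) = F(t, t^q, ..., t^{q^{n-1}}) for some quasi-symmetric polynomial F in n variables over F_{q^n}) if and only if f(γ^q) = f(γ) for every γ ∈ F_{q^n}. -/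
/-! Substituting `X_i ↦ t^(q^i)` sends the monomial `X^s` to `t^(∑ s_i q^i)`, so by uniqueness of
base-`q` digits it is a linear bijection from the polynomials of degree `< q` in each variable onto
the polynomials of degree `< q^n`. Since `γ^(q^n) = γ` on `F_{q^n}`, rotating the variables of `F`
amounts to precomposing the image of `F` with `γ ↦ γ^q`. So if `f` is Frobenius invariant, the
images of its reduced preimage `F` and of the rotation of `F` agree as functions on `F_{q^n}`; having
degree `< q^n`, they are equal, and injectivity makes `F` rotation invariant. -/

open Polynomial

section Digits

variable {q n : ℕ}

theorem weight_pow_eq_finFunctionFinEquiv (s : Fin n →₀ ℕ) (hs : ∀ i, s i < q) :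
    Finsupp.weight (fun i : Fin n => q ^ (i : ℕ)) s
      = finFunctionFinEquiv (fun i => (⟨s i, hs i⟩ : Fin q)) := by
  rw [Finsupp.weight_eq_sum, finFunctionFinEquiv_apply]
  rfl

theorem weight_pow_lt {s : Fin n →₀ ℕ} (hs : ∀ i, s i < q) :
    Finsupp.weight (fun i : Fin n => q ^ (i : ℕ)) s < q ^ n := by
  rw [weight_pow_eq_finFunctionFinEquiv s hs]
  exact Fin.is_lt _

theorem weight_pow_injOn :
    Set.InjOn (Finsupp.weight fun i : Fin n => q ^ (i : ℕ)) {s | ∀ i, s i < q} := by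
  intro s hs t ht hst
  rw [weight_pow_eq_finFunctionFinEquiv s hs, weight_pow_eq_finFunctionFinEquiv t ht] at hst
  have hdigits := finFunctionFinEquiv.injective (Fin.ext hst)
  ext i
  exact congrArg Fin.val (congrFun hdigits i)

theorem exists_weight_pow_eq {k : ℕ} (hk : k < q ^ n) :
    ∃ s : Fin n →₀ ℕ, (∀ i, s i < q) ∧ Finsupp.weight (fun i : Fin n => q ^ (i : ℕ)) s = k := by
  set d : Fin n → Fin q := finFunctionFinEquiv.symm ⟨k, hk⟩
  refine ⟨Finsupp.equivFunOnFinite.symm fun i => d i, fun i => (d i).is_lt, ?_⟩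
  rw [weight_pow_eq_finFunctionFinEquiv _ fun i => (d i).is_lt]
  simp only [Finsupp.coe_equivFunOnFinite_symm, Fin.eta, d, Equiv.apply_symm_apply]

end Digits

theorem pow_pow_finRotate {K : Type*} [Monoid K] {q n : ℕ} {γ : K} (hγ : γ ^ q ^ n = γ)
    (i : Fin n) : γ ^ q ^ (finRotate n i : ℕ) = (γ ^ q) ^ q ^ (i : ℕ) := by
  obtain ⟨m, rfl⟩ : ∃ m, n = m + 1 := ⟨n - 1, by have := i.pos; omega⟩
  rw [← pow_mul, ← pow_succ', coe_finRotate]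
  split_ifs with hi
  · rw [hi, Fin.val_last, pow_zero, pow_one, hγ]
  · rfl

noncomputable def frobeniusSubst (K : Type*) [CommSemiring K] (q n : ℕ) :
    MvPolynomial (Fin n) K →ₐ[K] K[X] :=
  MvPolynomial.aeval fun i => X ^ q ^ (i : ℕ)

section Subst

variable {K : Type*} [CommSemiring K] {q n : ℕ}

theorem frobeniusSubst_monomial (s : Fin n →₀ ℕ) (c : K) :
    frobeniusSubst K q n (MvPolynomial.monomial s c)
      = monomial (Finsupp.weight (fun i : Fin n => q ^ (i : ℕ)) s) c := by
  rw [frobeniusSubst, MvPolynomial.aeval_monomial, Finsupp.prod_fintype _ _ fun i => pow_zero _]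
  simp_rw [← pow_mul, Finset.prod_pow_eq_pow_sum]
  rw [Finsupp.weight_eq_sum]
  simp_rw [smul_eq_mul, mul_comm (q ^ _)]
  rw [Polynomial.algebraMap_eq, C_mul_X_pow_eq_monomial]

theorem frobeniusSubst_eq_sum (F : MvPolynomial (Fin n) K) :
    frobeniusSubst K q n F = ∑ s ∈ F.support,
      monomial (Finsupp.weight (fun i : Fin n => q ^ (i : ℕ)) s) (F.coeff s) := by
  conv_lhs => rw [F.as_sum]
  simp_rw [map_sum, frobeniusSubst_monomial]

theorem eval_frobeniusSubst (F : MvPolynomial (Fin n) K) (γ : K) :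
    (frobeniusSubst K q n F).eval γ = MvPolynomial.eval (fun i : Fin n => γ ^ q ^ (i : ℕ)) F := by
  rw [frobeniusSubst, ← Polynomial.coe_aeval_eq_eval, MvPolynomial.comp_aeval_apply]
  simp [MvPolynomial.aeval_eq_eval]

theorem eval_frobeniusSubst_rename_finRotate {γ : K} (hγ : γ ^ q ^ n = γ)
    (F : MvPolynomial (Fin n) K) :
    (frobeniusSubst K q n (MvPolynomial.rename (finRotate n) F)).eval γ
      = (frobeniusSubst K q n F).eval (γ ^ q) := by
  rw [eval_frobeniusSubst, eval_frobeniusSubst, MvPolynomial.eval_rename]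
  exact congrArg (MvPolynomial.eval · F) (funext (pow_pow_finRotate hγ))

theorem degreeLT_le_map_frobeniusSubst :
    degreeLT K (q ^ n) ≤
      (MvPolynomial.restrictDegree (Fin n) K (q - 1)).map (frobeniusSubst K q n).toLinearMap := by
  classical
  rw [degreeLT_eq_span_X_pow, Submodule.span_le]
  simp only [Finset.coe_image, Finset.coe_range, Set.image_subset_iff]
  intro k hk
  obtain ⟨s, hs, rfl⟩ := exists_weight_pow_eq (Set.mem_Iio.1 hk)
  refine ⟨MvPolynomial.monomial s 1, ?_, ?_⟩
  · rw [SetLike.mem_coe, MvPolynomial.mem_restrictDegree]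
    intro t ht i
    rw [Finset.mem_singleton.1 (MvPolynomial.support_monomial_subset ht)]
    exact Nat.le_sub_one_of_lt (hs i)
  · rw [AlgHom.toLinearMap_apply, frobeniusSubst_monomial, ← C_mul_X_pow_eq_monomial, C_1, one_mul]

variable (hq : 0 < q)
include hq

theorem lt_of_mem_support_of_mem_restrictDegree {F : MvPolynomial (Fin n) K}
    (hF : F ∈ MvPolynomial.restrictDegree (Fin n) K (q - 1)) {s : Fin n →₀ ℕ}
    (hs : s ∈ F.support) (i : Fin n) : s i < q := by
  have := (MvPolynomial.mem_restrictDegree _ F _).1 hF s hs i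
  omega

theorem frobeniusSubst_mem_degreeLT {F : MvPolynomial (Fin n) K}
    (hF : F ∈ MvPolynomial.restrictDegree (Fin n) K (q - 1)) :
    frobeniusSubst K q n F ∈ degreeLT K (q ^ n) := by
  rw [frobeniusSubst_eq_sum]
  refine Submodule.sum_mem _ fun s hs => ?_
  rw [mem_degreeLT]
  exact (degree_monomial_le _ _).trans_lt
    (WithBot.coe_lt_coe.2 (weight_pow_lt (lt_of_mem_support_of_mem_restrictDegree hq hF hs)))

theorem coeff_frobeniusSubst_weight {F : MvPolynomial (Fin n) K}
    (hF : F ∈ MvPolynomial.restrictDegree (Fin n) K (q - 1)) {s : Fin n →₀ ℕ}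
    (hs : ∀ i, s i < q) :
    (frobeniusSubst K q n F).coeff (Finsupp.weight (fun i : Fin n => q ^ (i : ℕ)) s)
      = F.coeff s := by
  classical
  rw [frobeniusSubst_eq_sum, finsetSum_coeff]
  refine (Finset.sum_eq_single s (fun t ht hts => ?_) fun hs' => ?_).trans ?_
  · rw [coeff_monomial, if_neg fun h => hts (weight_pow_injOn
      (lt_of_mem_support_of_mem_restrictDegree hq hF ht) hs h)]
  · rw [MvPolynomial.notMem_support_iff.1 hs', monomial_zero_right, coeff_zero]
  · rw [coeff_monomial, if_pos rfl]

theorem frobeniusSubst_injOn :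
    Set.InjOn (frobeniusSubst K q n) (MvPolynomial.restrictDegree (Fin n) K (q - 1)) := by
  intro F hF G hG hFG
  ext s
  by_cases hs : ∀ i, s i < q
  · rw [← coeff_frobeniusSubst_weight hq hF hs, ← coeff_frobeniusSubst_weight hq hG hs, hFG]
  · have hsupp {H : MvPolynomial (Fin n) K}
        (hH : H ∈ MvPolynomial.restrictDegree (Fin n) K (q - 1)) : H.coeff s = 0 :=
      MvPolynomial.notMem_support_iff.1 fun h =>
        hs (lt_of_mem_support_of_mem_restrictDegree hq hH h)
    rw [hsupp hF, hsupp hG]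

end Subst

theorem MvPolynomial.rename_equiv_mem_restrictDegree {σ τ R : Type*} [CommSemiring R]
    (e : σ ≃ τ) {F : MvPolynomial σ R} {m : ℕ} (hF : F ∈ restrictDegree σ R m) :
    rename e F ∈ restrictDegree τ R m := by
  classical
  rw [mem_restrictDegree, support_rename_of_injective e.injective, Finset.forall_mem_image]
  intro s hs i
  rw [Finsupp.mapDomain_equiv_apply]
  exact (mem_restrictDegree σ F m).1 hF s hs _

theorem quasiSymmetric_iff_frobenius_invariant_general (q n : ℕ)
    (K : Type*) [Field K] [Fintype K] (hK : Fintype.card K = q ^ n)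
    (f : Polynomial K) (hdeg : f.natDegree < q ^ n) :
    (∃ F : MvPolynomial (Fin n) K, MvPolynomial.rename (finRotate n) F = F ∧
        (MvPolynomial.aeval fun i : Fin n => (Polynomial.X : Polynomial K) ^ q ^ (i : ℕ)) F = f)
      ↔ ∀ γ : K, f.eval (γ ^ q) = f.eval γ := by
  have hq : 0 < q := Nat.pos_of_ne_zero fun h =>
    (hK ▸ Fintype.one_lt_card (α := K)).not_ge (h ▸ zero_pow_le_one n)
  have frobenius_fixed (γ : K) : γ ^ q ^ n = γ := hK ▸ FiniteField.pow_card γ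
  constructor
  · rintro ⟨F, hF, rfl⟩ γ
    rw [← frobeniusSubst, ← eval_frobeniusSubst_rename_finRotate (frobenius_fixed γ), hF]
  · intro hf
    obtain ⟨F, hF, rfl⟩ := degreeLT_le_map_frobeniusSubst
      (mem_degreeLT.2 (degree_le_natDegree.trans_lt (WithBot.coe_lt_coe.2 hdeg)))
    have hrot := MvPolynomial.rename_equiv_mem_restrictDegree (finRotate n) hF
    refine ⟨F, frobeniusSubst_injOn hq hrot hF ?_, rfl⟩
    refine eq_of_degree_sub_lt_of_eval_finset_eq Finset.univ ?_ fun γ _ => ?_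
    · rw [Finset.card_univ, hK, ← mem_degreeLT]
      exact Submodule.sub_mem _ (frobeniusSubst_mem_degreeLT hq hrot)
        (frobeniusSubst_mem_degreeLT hq hF)
    · rw [eval_frobeniusSubst_rename_finRotate (frobenius_fixed γ)]
      exact hf γ

/-- A polynomial `f(t) ∈ F_{q^n}[t]` of degree `< q^n` is
`(n,q)`-quasi-symmetric (i.e. `f(t) = F(t, t^q, …, t^{q^{n-1}})` for some polynomial `F` in
`n` variables fixed by the cyclic permutation of the variables) if and only if
`f(γ^q) = f(γ)` for every `γ ∈ F_{q^n}`. -/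
theorem quasiSymmetric_iff_frobenius_invariant (q n : ℕ) (hq : IsPrimePow q) (hn : 1 ≤ n)
    (K : Type*) [Field K] [Fintype K] (hK : Fintype.card K = q ^ n)
    (f : Polynomial K) (hdeg : f.natDegree < q ^ n) :
    (∃ F : MvPolynomial (Fin n) K, MvPolynomial.rename (finRotate n) F = F ∧
        (MvPolynomial.aeval fun i : Fin n => (Polynomial.X : Polynomial K) ^ q ^ (i : ℕ)) F = f)
      ↔ ∀ γ : K, f.eval (γ ^ q) = f.eval γ :=
  quasiSymmetric_iff_frobenius_invariant_general q n K hK f hdeg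
end

section
/- The polynomial f(t) = t^10 + 2t^6 + t^2 − 2 over the finite field F_25 with 25 elements satisfies f(γ^5) = f(γ) for every γ ∈ F_25 (i.e., f is (2,5)-quasi-symmetric), and f has no zeros in F_25, i.e., f(γ) ≠ 0 for all γ ∈ F_25. -/
/-!
Over any commutative ring, `t^10 + 2t^6 + t^2 - 2 = (t^5 + t)^2 - 2`. In a field with 25
elements `γ^25 = γ`, so `γ ↦ γ^5` only swaps the two summands of the trace `γ^5 + γ`, which gives
quasi-symmetry; moreover the trace is fixed by Frobenius, i.e. lies in `𝔽₅`, where `2` is not a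
square.
-/

open Polynomial

theorem eval_X_pow_ten_add_two_mul_X_pow_six_add_X_sq_sub_two {R : Type*} [CommRing R] (γ : R) :
    (X ^ 10 + 2 * X ^ 6 + X ^ 2 - 2 : R[X]).eval γ = (γ ^ 5 + γ) ^ 2 - 2 := by
  simp only [eval_sub, eval_add, eval_mul, eval_pow, eval_X, eval_ofNat]
  ring

theorem pow_five_add_self_pow_five {R : Type*} [CommRing R] [CharP R 5] {γ : R}
    (hγ : γ ^ 25 = γ) : (γ ^ 5 + γ) ^ 5 = γ ^ 5 + γ := by
  have := Fact.mk Nat.prime_five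
  rw [add_pow_char, ← pow_mul, hγ, add_comm]

theorem sq_ne_two_of_pow_five_eq_self {R : Type*} [CommRing R] [CharP R 5] {x : R}
    (hx : x ^ 5 = x) : x ^ 2 ≠ 2 := by
  intro hsq
  have h5 : (5 : R) = 0 := by exact_mod_cast CharP.cast_eq_zero R 5
  -- `x = x ^ 5 = (x ^ 2) ^ 2 * x = 4 * x`
  have h3x : 3 * x = 0 := by linear_combination hx - (x ^ 3 + 2 * x) * hsq
  have hx0 : x = 0 := by linear_combination 2 * h3x - x * h5
  have h2 : ((2 : ℕ) : R) = 0 := by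
    rw [hx0] at hsq
    exact_mod_cast hsq.symm.trans (zero_pow two_ne_zero)
  rw [CharP.cast_eq_zero_iff R 5] at h2
  norm_num at h2

/-- In the finite field with 25 elements, the polynomial
`f(t) = t^10 + 2t^6 + t^2 - 2` satisfies `f(γ^5) = f(γ)` for every `γ` (i.e. `f` is
`(2,5)`-quasi-symmetric) and has no zeros. -/
theorem example_quasiSymmetric_no_zeros_F25
    (K : Type*) [Field K] [Fintype K] (hK : Fintype.card K = 25) :
    (∀ γ : K,
        (Polynomial.X ^ 10 + 2 * Polynomial.X ^ 6 + Polynomial.X ^ 2 - 2 : Polynomial K).eval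
            (γ ^ 5)
          = (Polynomial.X ^ 10 + 2 * Polynomial.X ^ 6 + Polynomial.X ^ 2 - 2 :
              Polynomial K).eval γ) ∧
    ∀ γ : K,
      (Polynomial.X ^ 10 + 2 * Polynomial.X ^ 6 + Polynomial.X ^ 2 - 2 : Polynomial K).eval γ
        ≠ 0 := by
  have := Fact.mk Nat.prime_five
  have : CharP K 5 := charP_of_card_eq_prime_pow (f := 2) hK
  have hfrob (γ : K) : γ ^ 25 = γ := hK ▸ FiniteField.pow_card γ
  simp only [eval_X_pow_ten_add_two_mul_X_pow_six_add_X_sq_sub_two]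
  refine ⟨fun γ ↦ ?_, fun γ ↦ ?_⟩
  · rw [← pow_mul, hfrob, add_comm]
  · rw [sub_ne_zero]
    exact sq_ne_two_of_pow_five_eq_self (pow_five_add_self_pow_five (hfrob γ))
end

section
/- Let K be the algebraic closure of F_p (p a prime), let V be a finite additive subgroup of K, and define the separable F_p-linear polynomial L_V(T) = ∏_{v ∈ V} (T − v). Let f(x) ∈ K[x] and set h(T,x) = L_V(T) − f(x), regarded as a polynomial in two variables over K. Then h is reducible in K[T,x] if and only if there exist a polynomial g(x) ∈ K[x] and a proper additive subgroup W of V such that f(x) = L_{W'}(g(x)), where W' = L_W(V) denotes the image of V under the polynomial map L_W (which is a finite additive subgroup of K). -/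
set_option linter.unusedSectionVars false
open Polynomial

section Linearized
variable {K : Type*} [Field K]

/-- `s` is the finset of a finite additive subgroup: contains 0 and closed under subtraction. -/
def SubFinset (s : Finset K) : Prop := (0 : K) ∈ s ∧ ∀ a ∈ s, ∀ b ∈ s, a - b ∈ s

theorem SubFinset.zero_mem {s : Finset K} (hs : SubFinset s) : (0:K) ∈ s := hs.1

theorem SubFinset.sub_mem {s : Finset K} (hs : SubFinset s) {a b : K}
    (ha : a ∈ s) (hb : b ∈ s) : a - b ∈ s := hs.2 a ha b hb

theorem SubFinset.neg_mem {s : Finset K} (hs : SubFinset s) {a : K}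
    (ha : a ∈ s) : -a ∈ s := by
  have := hs.2 0 hs.1 a ha; simpa using this

theorem SubFinset.add_mem {s : Finset K} (hs : SubFinset s) {a b : K}
    (ha : a ∈ s) (hb : b ∈ s) : a + b ∈ s := by
  have := hs.2 a ha _ (hs.neg_mem hb)
  simpa [sub_neg_eq_add] using this

/-- reindexing of the product along translation by an element of the subgroup. -/
theorem SubFinset.prod_translate {s : Finset K} (hs : SubFinset s) {A : Type*} [CommRing A]
    (φ : K →+* A) (x : A) {c : K} (hc : c ∈ s) :
    ∏ w ∈ s, (x - φ (w - c)) = ∏ w ∈ s, (x - φ w) := by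
  refine Finset.prod_nbij' (fun w => w - c) (fun w => w + c) ?_ ?_ ?_ ?_ ?_
  · intro a ha; exact hs.sub_mem ha hc
  · intro a ha; exact hs.add_mem ha hc
  · intro a _; ring
  · intro a _; ring
  · intro a _; rfl

theorem SubFinset.prod_eq_zero_of_mem {s : Finset K} {A : Type*} [CommRing A]
    [IsDomain A] (φ : K →+* A) {v : K} (hv : v ∈ s) :
    ∏ w ∈ s, (φ v - φ w) = 0 :=
  Finset.prod_eq_zero hv (by simp)

/-- The key additivity identity as a polynomial identity in `K[X][Y]`, proved by
root counting. -/
theorem SubFinset.key_poly {s : Finset K} (hs : SubFinset s) :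
    (∏ v ∈ s, ((C X : (Polynomial K)[X]) + X - C (C v)))
      - ∏ v ∈ s, ((C X : (Polynomial K)[X]) - C (C v))
      - ∏ v ∈ s, ((X : (Polynomial K)[X]) - C (C v)) = 0 := by
  set A' : (Polynomial K)[X] := ∏ v ∈ s, ((C X : (Polynomial K)[X]) + X - C (C v)) with hA
  set D' : (Polynomial K)[X] := ∏ v ∈ s, ((C X : (Polynomial K)[X]) - C (C v)) with hD
  set B' : (Polynomial K)[X] := ∏ v ∈ s, ((X : (Polynomial K)[X]) - C (C v)) with hB
  have hfact : ∀ v : K, (C X : (Polynomial K)[X]) + X - C (C v) = X + C (X - C v) := by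
    intro v; rw [map_sub]; ring
  have hcard : 0 < s.card := Finset.card_pos.mpr ⟨0, hs.zero_mem⟩
  have hAmonic : A'.Monic := by
    rw [hA]
    exact monic_prod_of_monic _ _ (fun v _ => by rw [hfact]; exact monic_X_add_C _)
  have hBmonic : B'.Monic :=
    monic_prod_of_monic _ _ (fun v _ => monic_X_sub_C _)
  have hAdeg : A'.natDegree = s.card := by
    rw [hA, natDegree_prod _ _ (fun v _ => by rw [hfact]; exact (monic_X_add_C _).ne_zero)]
    rw [Finset.sum_congr rfl (fun v _ => by rw [hfact, natDegree_X_add_C]),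
      Finset.sum_const, smul_eq_mul, mul_one]
  have hBdeg : B'.natDegree = s.card := by
    rw [hB, natDegree_prod _ _ (fun v _ => (monic_X_sub_C _).ne_zero)]
    simp
  have hDC : D' = C (∏ v ∈ s, (X - C v)) := by rw [hD, map_prod]; simp
  by_cases hQ : A' - D' - B' = 0
  · exact hQ
  -- degree bound
  have hdegAB : A'.degree = B'.degree := by
    rw [degree_eq_natDegree hAmonic.ne_zero, degree_eq_natDegree hBmonic.ne_zero, hAdeg, hBdeg]
  have h1 : (A' - B').degree < (s.card : WithBot ℕ) := by
    rcases eq_or_ne (A' - B') 0 with h | h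
    · rw [h, degree_zero]; exact_mod_cast WithBot.bot_lt_coe _
    · have := degree_sub_lt hdegAB hAmonic.ne_zero
        (by rw [hAmonic.leadingCoeff, hBmonic.leadingCoeff])
      rwa [degree_eq_natDegree hAmonic.ne_zero, hAdeg] at this
  have h2 : (A' - D' - B').degree < (s.card : WithBot ℕ) := by
    have : A' - D' - B' = (A' - B') - D' := by ring
    rw [this]
    refine lt_of_le_of_lt (degree_sub_le _ _) (max_lt h1 ?_)
    rw [hDC]
    exact lt_of_le_of_lt degree_C_le (by exact_mod_cast hcard)
  have hdeg : (A' - D' - B').natDegree < s.card :=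
    (natDegree_lt_iff_degree_lt hQ).mpr h2
  -- evaluation at the |s| points `C v`, `v ∈ s`
  refine eq_zero_of_natDegree_lt_card_of_eval_eq_zero _
    (f := fun v : {x // x ∈ s} => (C v.1 : Polynomial K)) ?_ ?_ ?_
  · intro a b hab
    exact Subtype.ext (C_injective hab)
  · rintro ⟨v, hv⟩
    have eA : eval (C v) A' = ∏ w ∈ s, (X - C w) := by
      rw [hA, eval_prod]
      have he : ∀ w ∈ s, eval (C v) ((C X : (Polynomial K)[X]) + X - C (C w))
          = X - C (w - v) := by
        intro w _; rw [eval_sub, eval_add, eval_C, eval_C, eval_X, map_sub]; ring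
      rw [Finset.prod_congr rfl he]
      exact hs.prod_translate (C : K →+* Polynomial K) X hv
    have eD : eval (C v) D' = ∏ w ∈ s, (X - C w) := by
      rw [hD, eval_prod]
      exact Finset.prod_congr rfl (fun w _ => by rw [eval_sub, eval_C, eval_C])
    have eB : eval (C v) B' = 0 := by
      rw [hB, eval_prod]
      exact Finset.prod_eq_zero hv (by rw [eval_sub, eval_X, eval_C, sub_self])
    rw [eval_sub, eval_sub, eA, eD, eB, sub_self, sub_zero]
  · rwa [Fintype.card_coe]

/-- **Additivity** of the linearized product over any commutative ring. -/
theorem SubFinset.prod_add {s : Finset K} (hs : SubFinset s) {A : Type*} [CommRing A]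
    (φ : K →+* A) (a b : A) :
    ∏ v ∈ s, (a + b - φ v) = ∏ v ∈ s, (a - φ v) + ∏ v ∈ s, (b - φ v) := by
  have key := hs.key_poly
  have h2 := congrArg (eval₂ (eval₂RingHom φ a) b) key
  simp only [eval₂_sub, eval₂_finset_prod, eval₂_add, eval₂_X, eval₂_C,
    coe_eval₂RingHom, eval₂_zero] at h2
  rw [sub_sub, sub_eq_zero] at h2
  exact h2

/-- The additive map attached to the subgroup finset `s`. -/
noncomputable def lmap (s : Finset K) (a : K) : K := ∏ w ∈ s, (a - w)

theorem SubFinset.lmap_add {s : Finset K} (hs : SubFinset s) (a b : K) :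
    lmap s (a + b) = lmap s a + lmap s b := by
  have := hs.prod_add (RingHom.id K) a b
  simpa [lmap] using this

theorem lmap_eq_zero_iff {s : Finset K} (a : K) : lmap s a = 0 ↔ a ∈ s := by
  unfold lmap
  rw [Finset.prod_eq_zero_iff]
  constructor
  · rintro ⟨w, hw, h⟩; rwa [sub_eq_zero.mp h]
  · intro h; exact ⟨a, h, sub_self a⟩

theorem SubFinset.lmap_zero {s : Finset K} (hs : SubFinset s) : lmap s 0 = 0 :=
  (lmap_eq_zero_iff 0).mpr hs.zero_mem

theorem SubFinset.lmap_sub {s : Finset K} (hs : SubFinset s) (a b : K) :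
    lmap s (a - b) = lmap s a - lmap s b := by
  have := hs.lmap_add (a - b) b
  rw [sub_add_cancel] at this
  rw [this]; ring

variable [DecidableEq K]

theorem SubFinset.image_lmap {s t : Finset K} (hs : SubFinset s) (ht : SubFinset t) :
    SubFinset (s.image (lmap t)) := by
  constructor
  · exact Finset.mem_image.mpr ⟨0, hs.zero_mem, ht.lmap_zero⟩
  · intro a ha b hb
    obtain ⟨va, hva, rfl⟩ := Finset.mem_image.mp ha
    obtain ⟨vb, hvb, rfl⟩ := Finset.mem_image.mp hb
    exact Finset.mem_image.mpr ⟨va - vb, hs.sub_mem hva hvb, ht.lmap_sub va vb⟩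

theorem SubFinset.card_eq {s t : Finset K} (hs : SubFinset s) (ht : SubFinset t)
    (hsub : t ⊆ s) : s.card = (s.image (lmap t)).card * t.card := by
  rw [Finset.card_eq_sum_card_fiberwise (f := lmap t) (t := s.image (lmap t)) (fun v hv => Finset.mem_image_of_mem _ hv)]
  rw [Finset.sum_congr rfl (fun w' hw' => ?_), Finset.sum_const, smul_eq_mul]
  obtain ⟨v0, hv0, rfl⟩ := Finset.mem_image.mp hw'
  have hfib : s.filter (fun v => lmap t v = lmap t v0) = t.image (fun w => w + v0) := by
    ext a
    rw [Finset.mem_filter, Finset.mem_image]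
    constructor
    · rintro ⟨has, hla⟩
      refine ⟨a - v0, ?_, by ring⟩
      rw [← lmap_eq_zero_iff (s := t), ht.lmap_sub, hla, sub_self]
    · rintro ⟨w, hw, rfl⟩
      refine ⟨hs.add_mem (hsub hw) hv0, ?_⟩
      rw [ht.lmap_add, (lmap_eq_zero_iff w).mpr hw, zero_add]
  rw [hfib, Finset.card_image_of_injective _ (add_left_injective v0)]

/-- Two monic polynomials of the same degree agreeing on more points than their degree
are equal. -/
theorem monic_eq_of_eval_eq {R : Type*} [CommRing R] [IsDomain R] {P Q : R[X]}
    (hP : P.Monic) (hQ : Q.Monic) (hd : P.natDegree = Q.natDegree)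
    {s : Finset R} (hcard : P.natDegree ≤ s.card)
    (h : ∀ v ∈ s, eval v P = eval v Q) : P = Q := by
  by_cases h0 : P - Q = 0
  · exact sub_eq_zero.mp h0
  exfalso
  apply h0
  have hdeg : P.degree = Q.degree := by
    rw [degree_eq_natDegree hP.ne_zero, degree_eq_natDegree hQ.ne_zero, hd]
  have hlt : (P - Q).degree < P.degree :=
    degree_sub_lt hdeg hP.ne_zero (by rw [hP.leadingCoeff, hQ.leadingCoeff])
  refine eq_zero_of_natDegree_lt_card_of_eval_eq_zero _
    (f := fun v : {x // x ∈ s} => v.1) (fun a b hab => Subtype.ext hab) ?_ ?_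
  · rintro ⟨v, hv⟩
    rw [eval_sub, h v hv, sub_self]
  · rw [Fintype.card_coe]
    exact lt_of_lt_of_le (natDegree_lt_natDegree h0 hlt) hcard

/-- The linearized polynomial of a finset. -/
noncomputable def LP (s : Finset K) : K[X] := ∏ v ∈ s, (X - C v)

theorem LP_monic (s : Finset K) : (LP s).Monic :=
  monic_prod_of_monic _ _ (fun v _ => monic_X_sub_C v)

theorem LP_natDegree (s : Finset K) : (LP s).natDegree = s.card := by
  unfold LP
  rw [natDegree_prod _ _ (fun v _ => (monic_X_sub_C v).ne_zero)]
  simp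

theorem LP_eval₂ {A : Type*} [CommRing A] (φ : K →+* A) (x : A) (s : Finset K) :
    eval₂ φ x (LP s) = ∏ v ∈ s, (x - φ v) := by
  unfold LP
  rw [eval₂_finset_prod]
  exact Finset.prod_congr rfl (fun v _ => by rw [eval₂_sub, eval₂_X, eval₂_C])

theorem LP_eval (x : K) (s : Finset K) : eval x (LP s) = lmap s x := by
  unfold LP lmap
  rw [eval_prod]
  exact Finset.prod_congr rfl (fun v _ => by rw [eval_sub, eval_X, eval_C])

theorem SubFinset.LP_comp {s t : Finset K} (hs : SubFinset s) (ht : SubFinset t)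
    (hsub : t ⊆ s) : (LP (s.image (lmap t))).comp (LP t) = LP s := by
  have htcard : 0 < t.card := Finset.card_pos.mpr ⟨0, ht.zero_mem⟩
  have hm : ((LP (s.image (lmap t))).comp (LP t)).Monic :=
    (LP_monic _).comp (LP_monic _) (by rw [LP_natDegree]; omega)
  have hd : ((LP (s.image (lmap t))).comp (LP t)).natDegree = s.card := by
    rw [natDegree_comp, LP_natDegree, LP_natDegree, ← hs.card_eq ht hsub]
  refine monic_eq_of_eval_eq hm (LP_monic s) (by rw [hd, LP_natDegree]) (s := s)
    (by rw [hd]) (fun v hv => ?_)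
  rw [eval_comp, LP_eval, LP_eval, LP_eval,
    (lmap_eq_zero_iff _).mpr (Finset.mem_image_of_mem _ hv),
    (lmap_eq_zero_iff _).mpr hv]

/-- The easy direction: a decomposition gives a factorization. -/
theorem reducible_of_comp {s t : Finset K} (hs : SubFinset s) (ht : SubFinset t)
    (hsub : t ⊆ s) (hne : t ≠ s) (g f : K[X])
    (hf : f = (LP (s.image (lmap t))).comp g) :
    ¬ Irreducible ((LP s).map (C : K →+* K[X]) - C f) := by
  set im := s.image (lmap t) with him_def
  have him : SubFinset im := hs.image_lmap ht
  have htcard : 0 < t.card := Finset.card_pos.mpr ⟨0, ht.zero_mem⟩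
  set CC : K →+* (Polynomial K)[X] :=
    (C : Polynomial K →+* (Polynomial K)[X]).comp (C : K →+* Polynomial K) with hCC
  set y : (Polynomial K)[X] := ∏ w ∈ t, (X - C (C w)) with hy
  -- rewrite the polynomial as a product with at least two nonunit factors
  have hmain : (LP s).map (C : K →+* K[X]) - C f
      = ∏ w' ∈ im, (y - C g - C (C w')) := by
    have h1 : (LP s).map (C : K →+* K[X]) = ∏ v ∈ s, (X - C (C v)) := by
      unfold LP
      rw [Polynomial.map_prod]
      exact Finset.prod_congr rfl (fun v _ => by rw [Polynomial.map_sub, map_X, map_C])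
    have h2 : ∏ v ∈ s, ((X : (Polynomial K)[X]) - C (C v)) = ∏ w' ∈ im, (y - C (C w')) := by
      have e1 : ∏ v ∈ s, ((X : (Polynomial K)[X]) - C (C v)) = eval₂ CC X (LP s) := by
        rw [LP_eval₂]; rfl
      rw [e1, ← hs.LP_comp ht hsub, eval₂_comp, LP_eval₂, LP_eval₂]
      rfl
    have h3 : C f = ∏ w' ∈ im, ((C g : (Polynomial K)[X]) - C (C w')) := by
      rw [hf]
      unfold LP
      rw [prod_comp, map_prod]
      exact Finset.prod_congr rfl (fun w' _ => by rw [sub_comp, X_comp, C_comp, map_sub])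
    have h4 := him.prod_add CC (y - C g) (C g)
    rw [sub_add_cancel] at h4
    simp only [hCC, RingHom.comp_apply] at h4
    rw [h1, h2, h3, h4]
    ring
  rw [hmain]
  -- at least two factors
  have hcard2 : 2 ≤ im.card := by
    by_contra hlt
    push_neg at hlt
    have h1 : im.Nonempty := ⟨0, him.zero_mem⟩
    interval_cases h : im.card
    · exact absurd (Finset.card_eq_zero.mp h ▸ h1) (by simp)
    · have := hs.card_eq ht hsub
      rw [h, one_mul] at this
      exact hne (Finset.eq_of_subset_of_card_le hsub (le_of_eq this))
  -- each factor is a nonunit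
  have hymonic : y.Monic := by
    rw [hy]
    exact monic_prod_of_monic _ _ (fun w _ => monic_X_sub_C _)
  have hydeg : y.natDegree = t.card := by
    rw [hy, natDegree_prod _ _ (fun w _ => (monic_X_sub_C _).ne_zero)]
    simp
  have hfac : ∀ w' : K, ¬ IsUnit (y - C g - C (C w')) := by
    intro w' hu
    have heq : y - C g - C (C w') = y - C (g + C w') := by rw [map_add]; ring
    rw [heq] at hu
    have hdeg0 : (y - C (g + C w')).natDegree = 0 := natDegree_eq_zero_of_isUnit hu
    rw [natDegree_sub_C, hydeg] at hdeg0
    omega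
  -- split off one factor
  obtain ⟨w0, hw0⟩ : im.Nonempty := ⟨0, him.zero_mem⟩
  intro hirr
  rcases hirr.isUnit_or_isUnit (Finset.mul_prod_erase im _ hw0).symm with hu | hu
  · exact hfac w0 hu
  · obtain ⟨w1, hw1⟩ : (im.erase w0).Nonempty := by
      rw [← Finset.card_pos, Finset.card_erase_of_mem hw0]
      omega
    exact hfac w1 (isUnit_of_dvd_unit (Finset.dvd_prod_of_mem (fun x => y - C g - C (C x)) hw1) hu)

set_option maxHeartbeats 2000000 in
set_option synthInstance.maxHeartbeats 1000000 in
/-- The hard direction: a nontrivial factorization gives a decomposition. -/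
theorem comp_of_reducible {s : Finset K} (hs : SubFinset s) (f : K[X])
    (hred : ¬ Irreducible ((LP s).map (C : K →+* K[X]) - C f)) :
    ∃ (g : K[X]) (t : Finset K), SubFinset t ∧ t ⊆ s ∧ t ≠ s ∧
      f = (LP (s.image (lmap t))).comp g := by
  classical
  set h : (Polynomial K)[X] := (LP s).map (C : K →+* Polynomial K) - C f with hh
  have hn1 : 1 ≤ s.card := Finset.card_pos.mpr ⟨0, hs.zero_mem⟩
  have hLPdeg : ((LP s).map (C : K →+* Polynomial K)).natDegree = s.card := by
    rw [(LP_monic s).natDegree_map, LP_natDegree]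
  have hmonic : h.Monic := by
    rw [hh]
    refine ((LP_monic s).map _).sub_of_left ?_
    refine lt_of_le_of_lt degree_C_le ?_
    rw [degree_eq_natDegree ((LP_monic s).map (C : K →+* Polynomial K)).ne_zero, hLPdeg]
    exact_mod_cast hn1
  have hhdeg : h.natDegree = s.card := by
    rw [hh, natDegree_sub_C, hLPdeg]
  set F := FractionRing (Polynomial K) with hF
  set E := AlgebraicClosure F with hE
  set ψ : Polynomial K →+* E := algebraMap (Polynomial K) E with hψ
  set ε : K →+* E := ψ.comp (C : K →+* Polynomial K) with hε
  have hψinj : Function.Injective ψ := by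
    rw [hψ, IsScalarTower.algebraMap_eq (Polynomial K) F E]
    exact (algebraMap F E).injective.comp (IsFractionRing.injective (Polynomial K) F)
  have hεinj : Function.Injective ε := hψinj.comp C_injective
  set κ : K →+* F := (algebraMap (Polynomial K) F).comp (C : K →+* Polynomial K) with hκ
  have hεκ : ∀ w : K, ε w = algebraMap F E (κ w) := by
    intro w
    rw [hε, hψ, hκ, RingHom.comp_apply, RingHom.comp_apply,
      IsScalarTower.algebraMap_eq (Polynomial K) F E]
    rfl
  -- the polynomial over E
  have hEeq : h.map ψ = ∏ v ∈ s, (X - C (ε v)) - C (ψ f) := by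
    rw [hh, Polynomial.map_sub, map_C, Polynomial.map_map]
    congr 1
    unfold LP
    rw [Polynomial.map_prod]
    exact Finset.prod_congr rfl (fun v _ => by rw [Polynomial.map_sub, map_X, map_C])
  -- a root of `h` over `E`
  have hhψ0 : h.map ψ ≠ 0 := (hmonic.map ψ).ne_zero
  obtain ⟨t0, ht0⟩ : ∃ x : E, IsRoot (h.map ψ) x := by
    refine IsAlgClosed.exists_root _ ?_
    rw [degree_eq_natDegree hhψ0, hmonic.natDegree_map, hhdeg]
    exact_mod_cast Nat.one_le_iff_ne_zero.mp hn1
  have hψf : ψ f = ∏ v ∈ s, (t0 - ε v) := by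
    have h1 := ht0
    rw [IsRoot, hEeq, eval_sub, eval_C, eval_prod] at h1
    have h2 : ∀ v ∈ s, eval t0 ((X : E[X]) - C (ε v)) = t0 - ε v :=
      fun v _ => by rw [eval_sub, eval_X, eval_C]
    rw [Finset.prod_congr rfl h2, sub_eq_zero] at h1
    exact h1.symm
  -- `t0` is integral over F and over K[x]
  have haev : aeval t0 (h.map (algebraMap (Polynomial K) F)) = 0 := by
    rw [aeval_def, ← eval_map, Polynomial.map_map]
    rw [← IsScalarTower.algebraMap_eq (Polynomial K) F E, ← hψ]
    exact ht0
  have ht0int : IsIntegral F t0 :=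
    ⟨h.map (algebraMap (Polynomial K) F), hmonic.map _, haev⟩
  -- the minimal polynomial
  set m := minpoly F t0 with hm
  have hm_monic : m.Monic := minpoly.monic ht0int
  have hmdvd : m ∣ h.map (algebraMap (Polynomial K) F) := minpoly.dvd F t0 haev
  have hFdeg : (h.map (algebraMap (Polynomial K) F)).natDegree = s.card := by
    rw [hmonic.natDegree_map, hhdeg]
  have hFne : h.map (algebraMap (Polynomial K) F) ≠ 0 :=
    (hmonic.map (algebraMap (Polynomial K) F)).ne_zero
  have hm_deg_lt : m.natDegree < s.card := by
    rcases lt_or_eq_of_le (le_of_le_of_eq (natDegree_le_of_dvd hmdvd hFne) hFdeg) with hlt | heq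
    · exact hlt
    exfalso
    obtain ⟨r, hr⟩ := hmdvd
    have hr0 : r ≠ 0 := by
      intro h0; rw [h0, mul_zero] at hr; exact hFne hr
    have hrdeg : r.natDegree = 0 := by
      have := congrArg natDegree hr
      rw [natDegree_mul hm_monic.ne_zero hr0, hFdeg, heq] at this
      omega
    have hrlc : r = C (r.coeff 0) := eq_C_of_natDegree_le_zero (le_of_eq hrdeg)
    have hrc : r.coeff 0 = 1 := by
      have hlc := congrArg leadingCoeff hr
      rw [leadingCoeff_mul, hm_monic.leadingCoeff,
        (hmonic.map (algebraMap (Polynomial K) F)).leadingCoeff, one_mul] at hlc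
      rw [hrlc, leadingCoeff_C] at hlc
      exact hlc.symm
    rw [hrc, map_one] at hrlc
    rw [hrlc, mul_one] at hr
    refine hred ((hmonic.irreducible_iff_irreducible_map_fraction_map (K := F)).mpr ?_)
    rw [hr]
    exact minpoly.irreducible ht0int
  -- the factorization of `h` over `E` into distinct linear factors
  have hEfactor : h.map ψ = ∏ v ∈ s, (X - C (t0 + ε v)) := by
    refine monic_eq_of_eval_eq (hmonic.map ψ)
      (monic_prod_of_monic _ _ (fun v _ => monic_X_sub_C _)) ?_
      (s := s.image (fun v => t0 + ε v)) ?_ ?_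
    · rw [hmonic.natDegree_map, hhdeg,
        natDegree_prod _ _ (fun v _ => (monic_X_sub_C _).ne_zero),
        Finset.sum_congr rfl (fun v _ => natDegree_X_sub_C (t0 + ε v)),
        Finset.sum_const, smul_eq_mul, mul_one]
    · rw [hmonic.natDegree_map, hhdeg,
        Finset.card_image_of_injective _ (fun a b hab => hεinj (by
          have : ε a = ε b := by
            have := hab; simpa using this
          exact this))]
    · intro u hu
      obtain ⟨v, hv, rfl⟩ := Finset.mem_image.mp hu
      have e1 : eval (t0 + ε v) (h.map ψ) = 0 := by
        rw [hEeq, eval_sub, eval_C, eval_prod]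
        have h2 : ∀ w ∈ s, eval (t0 + ε v) ((X : E[X]) - C (ε w)) = t0 + ε v - ε w :=
          fun w _ => by rw [eval_sub, eval_X, eval_C]
        rw [Finset.prod_congr rfl h2, hs.prod_add ε t0 (ε v),
          SubFinset.prod_eq_zero_of_mem ε hv, add_zero, hψf, sub_self]
      have e2 : eval (t0 + ε v) (∏ w ∈ s, ((X : E[X]) - C (t0 + ε w))) = 0 := by
        rw [eval_prod]
        exact Finset.prod_eq_zero hv (by rw [eval_sub, eval_X, eval_C, sub_self])
      rw [e1, e2]
  -- the subgroup finset attached to the minimal polynomial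
  set mE : E[X] := m.map (algebraMap F E) with hmE
  have hmEaev : ∀ u : E, eval u mE = aeval u m := fun u => by
    rw [hmE, aeval_def, eval_map]
  have hmE_monic : mE.Monic := hm_monic.map _
  set S : Finset K := s.filter (fun v => eval (t0 + ε v) mE = 0) with hS
  have hSsub : S ⊆ s := Finset.filter_subset _ _
  have hmEdvd : mE ∣ h.map ψ := by
    have : (h.map (algebraMap (Polynomial K) F)).map (algebraMap F E) = h.map ψ := by
      rw [Polynomial.map_map, ← IsScalarTower.algebraMap_eq (Polynomial K) F E, hψ]
    rw [← this]
    exact Polynomial.map_dvd _ hmdvd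
  have hinj2 : ∀ x ∈ s, ∀ y ∈ s, t0 + ε x = t0 + ε y → x = y := by
    intro x _ y _ hxy
    exact hεinj (by simpa using hxy)
  have hEfactor' : h.map ψ = ∏ u ∈ s.image (fun v => t0 + ε v), (X - C u) := by
    rw [hEfactor, Finset.prod_image hinj2]
  have hrootsE : (h.map ψ).roots = (s.image (fun v => t0 + ε v)).val := by
    rw [hEfactor', roots_prod_X_sub_C]
  have hmEroots_le : mE.roots ≤ (h.map ψ).roots := roots.le_of_dvd hhψ0 hmEdvd
  have hmEnodup : mE.roots.Nodup :=
    Multiset.nodup_of_le (hrootsE ▸ hmEroots_le) (s.image (fun v => t0 + ε v)).nodup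
  have hmEne : mE ≠ 0 := hmE_monic.ne_zero
  have hrootsmE : mE.roots = (S.image (fun v => t0 + ε v)).val := by
    rw [Multiset.Nodup.ext hmEnodup (S.image (fun v => t0 + ε v)).nodup]
    intro u
    constructor
    · intro hu
      have humem : u ∈ (s.image (fun v => t0 + ε v)).val := by
        rw [← hrootsE]
        exact Multiset.mem_of_le hmEroots_le hu
      obtain ⟨v, hv, rfl⟩ := Finset.mem_image.mp humem
      refine Finset.mem_image.mpr ⟨v, ?_, rfl⟩
      rw [hS, Finset.mem_filter]
      exact ⟨hv, ((mem_roots hmEne).mp hu)⟩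
    · intro hu
      obtain ⟨v, hv, rfl⟩ := Finset.mem_image.mp hu
      rw [hS, Finset.mem_filter] at hv
      exact (mem_roots hmEne).mpr hv.2
  have hmEfactor : mE = ∏ v ∈ S, (X - C (t0 + ε v)) := by
    have hsplit : Splits mE := IsAlgClosed.splits mE
    have := hsplit.eq_prod_roots_of_monic hmE_monic
    rw [hrootsmE] at this
    rw [this, ← Finset.prod_eq_multiset_prod, Finset.prod_image
      (fun x hx y hy => hinj2 x (hSsub hx) y (hSsub hy))]
  have hScard : S.card = m.natDegree := by
    have h1 : mE.natDegree = m.natDegree := hm_monic.natDegree_map _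
    rw [hmEfactor] at h1
    rw [← h1, natDegree_prod _ _ (fun v _ => (monic_X_sub_C _).ne_zero),
      Finset.sum_congr rfl (fun v _ => natDegree_X_sub_C (t0 + ε v)),
      Finset.sum_const, smul_eq_mul, mul_one]
  have hSne : S ≠ s := by
    intro hSs
    rw [hSs] at hScard
    omega
  -- membership criterion in `S` via `aeval`
  have hmemS : ∀ v : K, v ∈ S ↔ v ∈ s ∧ aeval (t0 + ε v) m = 0 := by
    intro v
    rw [hS, Finset.mem_filter, hmEaev]
  have h0S : (0 : K) ∈ S := by
    rw [hmemS]
    refine ⟨hs.zero_mem, ?_⟩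
    rw [map_zero, add_zero]
    exact minpoly.aeval F t0
  -- closure under addition, via embeddings of the root field
  haveI hmirr : Fact (Irreducible m) := ⟨minpoly.irreducible ht0int⟩
  have hSadd : ∀ a ∈ S, ∀ b ∈ S, a + b ∈ S := by
    intro a ha b hb
    obtain ⟨has, haev_a⟩ := (hmemS a).mp ha
    obtain ⟨hbs, haev_b⟩ := (hmemS b).mp hb
    rw [hmemS]
    refine ⟨hs.add_mem has hbs, ?_⟩
    set φa : AdjoinRoot m →ₐ[F] E := AdjoinRoot.liftAlgHom m (Algebra.ofId F E) (t0 + ε a) (by rw [← haev_a]; rfl) with hφa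
    set φ0 : AdjoinRoot m →ₐ[F] E := AdjoinRoot.liftAlgHom m (Algebra.ofId F E) t0 (by rw [← minpoly.aeval F t0]; rfl) with hφ0
    set x : AdjoinRoot m := AdjoinRoot.root m + algebraMap F _ (κ b) with hx
    have hz : aeval x m = 0 := by
      have h1 : φ0 (aeval x m) = 0 := by
        have e : φ0 (aeval x m) = aeval (φ0 x) m := (aeval_algHom_apply φ0 x m).symm
        rw [e, hx, map_add, AlgHom.commutes, hφ0, AdjoinRoot.liftAlgHom_root, ← hεκ]
        exact haev_b
      have hφ0inj : Function.Injective φ0 := by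
        have := RingHom.injective (φ0.toRingHom)
        simpa using this
      exact hφ0inj (by rw [h1, map_zero])
    have h2 : aeval (φa x) m = 0 := by
      rw [aeval_algHom_apply φa x m, hz, map_zero]
    rw [hx, map_add, AlgHom.commutes, hφa, AdjoinRoot.liftAlgHom_root, ← hεκ] at h2
    rw [map_add, ← add_assoc]
    exact h2
  -- closure under negation, since every element has finite additive order
  have hsmem : ∀ (k : ℕ) (a : K), a ∈ s → k • a ∈ s := by
    intro k a ha
    induction k with
    | zero => simpa using hs.zero_mem
    | succ k ih => rw [succ_nsmul]; exact hs.add_mem ih ha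
  have hSsmul : ∀ (k : ℕ) (a : K), a ∈ S → (k + 1) • a ∈ S := by
    intro k a ha
    induction k with
    | zero => simpa using ha
    | succ k ih => rw [succ_nsmul]; exact hSadd _ ih _ ha
  have hSneg : ∀ a ∈ S, -a ∈ S := by
    intro a ha
    have hfin : ∃ k : ℕ, 1 ≤ k ∧ k • a = 0 := by
      by_contra hcon
      push_neg at hcon
      have hinj : Function.Injective (fun k : ℕ => k • a) := by
        intro i j hij
        simp only at hij
        rcases lt_trichotomy i j with hlt | heq | hgt
        · exfalso
          have : (j - i) • a = 0 := by
            rw [sub_nsmul a (le_of_lt hlt), hij, add_neg_cancel]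
          exact hcon (j - i) (by omega) this
        · exact heq
        · exfalso
          have : (i - j) • a = 0 := by
            rw [sub_nsmul a (le_of_lt hgt), hij, add_neg_cancel]
          exact hcon (i - j) (by omega) this
      exact Set.not_infinite.mpr s.finite_toSet
        (Set.infinite_of_injective_forall_mem hinj
          (fun k : ℕ => hsmem k a (hSsub ha)))
    obtain ⟨k, hk1, hk0⟩ := hfin
    rcases Nat.eq_or_lt_of_le hk1 with h1 | h2
    · have : a = 0 := by rw [← h1] at hk0; simpa using hk0
      rw [this, neg_zero]
      exact h0S
    · have hk2 : k - 1 ≥ 1 := by omega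
      have hmem : (k - 1) • a ∈ S := by
        have := hSsmul (k - 2) a ha
        have hn : k - 2 + 1 = k - 1 := by omega
        rwa [hn] at this
      have : (k - 1) • a = -a := by
        have h3 : (k - 1) • a + a = 0 := by
          have : (k - 1) • a + a = k • a := by
            rw [← succ_nsmul]
            congr 1
            omega
          rw [this, hk0]
        exact eq_neg_of_add_eq_zero_left h3
      rwa [this] at hmem
  have hSfin : SubFinset S := by
    constructor
    · exact h0S
    · intro a ha b hb
      rw [sub_eq_add_neg]
      exact hSadd a ha _ (hSneg b hb)
  -- the constant cE = L_S(t0)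
  set cE : E := ∏ w ∈ S, (t0 - ε w) with hcE
  have hmE2 : mE = ∏ w ∈ S, (X - C (ε w)) - C cE := by
    have hadd := hSfin.prod_add ((C : E →+* E[X]).comp ε) (X - C t0 : E[X]) (C t0)
    rw [sub_add_cancel] at hadd
    simp only [RingHom.comp_apply] at hadd
    have e1 : ∏ w ∈ S, ((X : E[X]) - C t0 - C (ε w)) = mE := by
      rw [hmEfactor]
      exact Finset.prod_congr rfl (fun w _ => by rw [map_add]; ring)
    have e2 : ∏ w ∈ S, ((C t0 : E[X]) - C (ε w)) = C cE := by
      rw [hcE, map_prod]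
      exact Finset.prod_congr rfl (fun w _ => by rw [map_sub])
    rw [e1, e2] at hadd
    exact eq_sub_iff_add_eq.mpr hadd.symm
  -- extract the constant over F
  set μ : F[X] := (LP S).map κ - m with hμdef
  have hμmapE : μ.map (algebraMap F E) = C cE := by
    rw [hμdef, Polynomial.map_sub, Polynomial.map_map, ← hmE]
    have hco : (algebraMap F E).comp κ = ε := RingHom.ext (fun w => (hεκ w).symm)
    rw [hco]
    have hLPS : (LP S).map ε = ∏ w ∈ S, (X - C (ε w)) := by
      unfold LP
      rw [Polynomial.map_prod]
      exact Finset.prod_congr rfl (fun w _ => by rw [Polynomial.map_sub, map_X, map_C])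
    rw [hLPS, hmE2]
    ring
  set c' : F := μ.coeff 0 with hc'
  have hμC : μ = C c' := by
    have hdeg := natDegree_map_eq_of_injective (algebraMap F E).injective μ
    rw [hμmapE, natDegree_C] at hdeg
    exact eq_C_of_natDegree_le_zero (le_of_eq hdeg.symm)
  have htoEc' : algebraMap F E c' = cE := by
    have hco := congrArg (fun p => coeff p 0) hμmapE
    simpa [coeff_map] using hco
  -- integrality of the constant over K[x]
  have ht0intR : IsIntegral (Polynomial K) t0 :=
    ⟨h, hmonic, by rw [← hψ, ← eval_map]; exact ht0⟩
  have hcEint : IsIntegral (Polynomial K) cE := by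
    have hmem : cE ∈ integralClosure (Polynomial K) E := by
      rw [hcE]
      refine Subalgebra.prod_mem _ (fun w hw => ?_)
      refine sub_mem ?_ ?_
      · exact ht0intR
      · exact isIntegral_algebraMap
    exact hmem
  have hc'int : IsIntegral (Polynomial K) c' := by
    refine IsIntegral.tower_bot (algebraMap F E).injective ?_
    rw [htoEc']
    exact hcEint
  obtain ⟨g, hg⟩ := IsIntegrallyClosed.isIntegral_iff.mp hc'int
  -- conclusion
  refine ⟨g, S, hSfin, hSsub, hSne, hψinj ?_⟩
  have hψg : ψ g = cE := by
    rw [hψ, IsScalarTower.algebraMap_eq (Polynomial K) F E, RingHom.comp_apply, hg, htoEc']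
  have hRHS : ψ ((LP (s.image (lmap S))).comp g) = ∏ w' ∈ s.image (lmap S), (cE - ε w') := by
    conv_lhs => rw [LP]
    rw [prod_comp, map_prod]
    refine Finset.prod_congr rfl (fun w' _ => ?_)
    rw [sub_comp, X_comp, C_comp, map_sub, hψg]
    rfl
  have hLHS : ψ f = ∏ w' ∈ s.image (lmap S), (cE - ε w') := by
    rw [hψf]
    have e1 : ∏ v ∈ s, (t0 - ε v) = eval₂ ε t0 (LP s) := (LP_eval₂ ε t0 s).symm
    rw [e1, ← hs.LP_comp hSfin hSsub, eval₂_comp, LP_eval₂, LP_eval₂, ← hcE]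
  rw [hLHS, hRHS]

end Linearized

/-- Let `K` be the algebraic closure of `F_p`, `V` a finite additive
subgroup of `K`, `L_V(T) = ∏_{v ∈ V} (T - v)`, and `f(x) ∈ K[x]`. The bivariate polynomial
`h(T,x) = L_V(T) - f(x)` (an element of `K[x][T]`) is reducible iff there exist `g(x) ∈ K[x]`
and a proper additive subgroup `W` of `V` such that `f = L_{W'} ∘ g`, where
`W' = L_W(V)` is the image of `V` under the polynomial map `L_W`. -/
theorem linearized_minus_f_reducible_iff (p : ℕ) [Fact p.Prime]
    (V : AddSubgroup (AlgebraicClosure (ZMod p)))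
    (hV : (V : Set (AlgebraicClosure (ZMod p))).Finite)
    (f : Polynomial (AlgebraicClosure (ZMod p))) :
    ¬ Irreducible
        ((hV.toFinset.prod fun v => X - C v).map
            (C : AlgebraicClosure (ZMod p) →+* Polynomial (AlgebraicClosure (ZMod p)))
          - C f)
      ↔ ∃ (g : Polynomial (AlgebraicClosure (ZMod p)))
          (W : AddSubgroup (AlgebraicClosure (ZMod p)))
          (hle : (W : Set (AlgebraicClosure (ZMod p))) ⊆
            (V : Set (AlgebraicClosure (ZMod p)))),
          W ≠ V ∧
          f = ((Set.Finite.image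
                  (fun v => Polynomial.eval v
                    ((hV.subset hle).toFinset.prod fun w => X - C w)) hV).toFinset.prod
                fun w' => X - C w').comp g := by
  classical
  set K := AlgebraicClosure (ZMod p) with hK
  have hsV : SubFinset hV.toFinset := by
    constructor
    · rw [Set.Finite.mem_toFinset]; exact V.zero_mem
    · intro a ha b hb
      rw [Set.Finite.mem_toFinset] at *
      exact V.sub_mem ha hb
  -- general helper converting the statement's finset
  have himage : ∀ (W : AddSubgroup K) (hle : (W : Set K) ⊆ (V : Set K)),
      SubFinset ((hV.subset hle).toFinset) ∧
      (hV.subset hle).toFinset ⊆ hV.toFinset ∧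
      (Set.Finite.image
          (fun v => Polynomial.eval v
            ((hV.subset hle).toFinset.prod fun w => X - C w)) hV).toFinset
        = hV.toFinset.image (lmap ((hV.subset hle).toFinset)) := by
    intro W hle
    refine ⟨⟨?_, ?_⟩, ?_, ?_⟩
    · rw [Set.Finite.mem_toFinset]; exact W.zero_mem
    · intro a ha b hb
      rw [Set.Finite.mem_toFinset] at *
      exact W.sub_mem ha hb
    · intro a ha
      rw [Set.Finite.mem_toFinset] at *
      exact hle ha
    · ext x
      rw [Set.Finite.mem_toFinset, Finset.mem_image]
      simp only [Set.mem_image]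
      constructor
      · rintro ⟨v, hv, hvx⟩
        refine ⟨v, (Set.Finite.mem_toFinset hV).mpr hv, ?_⟩
        rw [← hvx]
        exact (LP_eval v _).symm
      · rintro ⟨v, hv, hvx⟩
        refine ⟨v, (Set.Finite.mem_toFinset hV).mp hv, ?_⟩
        rw [← hvx]
        exact LP_eval v _
  constructor
  · -- hard direction
    intro hred
    obtain ⟨g, t, ht, hts, htne, hf⟩ := comp_of_reducible hsV f hred
    have hp2 : 2 ≤ p := (Fact.out : p.Prime).two_le
    have hsmulmem : ∀ (k : ℕ) (a : K), a ∈ t → (k + 1) • a ∈ t := by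
      intro k a ha
      induction k with
      | zero => simpa using ha
      | succ k ih => rw [succ_nsmul]; exact ht.add_mem ih ha
    set W : AddSubgroup K := {
      carrier := ↑t
      add_mem' := fun {a b} ha hb => by
        rw [Finset.mem_coe] at *
        exact ht.add_mem ha hb
      zero_mem' := by
        rw [Finset.mem_coe]; exact ht.zero_mem
      neg_mem' := fun {a} ha => by
        rw [Finset.mem_coe] at *
        have hchar : (p : K) = 0 := CharP.cast_eq_zero K p
        have hpa : p • a = 0 := by
          rw [nsmul_eq_mul, hchar, zero_mul]
        have hmem : (p - 1) • a ∈ t := by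
          have := hsmulmem (p - 2) a ha
          have hn : p - 2 + 1 = p - 1 := by omega
          rwa [hn] at this
        have heq : (p - 1) • a = -a := by
          refine eq_neg_of_add_eq_zero_left ?_
          have he : (p - 1) • a + a = p • a := by
            rw [← succ_nsmul]
            congr 1
            omega
          rw [he, hpa]
        rwa [heq] at hmem } with hW
    have hleW : (W : Set K) ⊆ (V : Set K) := by
      intro a ha
      have hat : a ∈ t := Finset.mem_coe.mp ha
      exact (Set.Finite.mem_toFinset hV).mp (hts hat)
    have htW : (hV.subset hleW).toFinset = t := by
      ext a
      rw [Set.Finite.mem_toFinset]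
      exact Finset.mem_coe
    have hneW : W ≠ V := by
      intro hWV
      apply htne
      ext a
      constructor
      · intro ha; exact hts ha
      · intro ha
        have h1 : a ∈ (V : Set K) := (Set.Finite.mem_toFinset hV).mp ha
        rw [← hWV] at h1
        exact Finset.mem_coe.mp h1
    obtain ⟨_, _, hW3⟩ := himage W hleW
    refine ⟨g, W, hleW, hneW, ?_⟩
    have hfin : (Set.Finite.image
        (fun v => Polynomial.eval v
          ((hV.subset hleW).toFinset.prod fun w => X - C w)) hV).toFinset
        = hV.toFinset.image (lmap t) := by
      rw [hW3, htW]
    rw [hfin]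
    exact hf
  · -- easy direction
    rintro ⟨g, W, hle, hne, hf⟩
    obtain ⟨hW1, hW2, hW3⟩ := himage W hle
    have htne : (hV.subset hle).toFinset ≠ hV.toFinset := by
      intro heq
      apply hne
      ext a
      constructor
      · intro ha
        exact hle ha
      · intro ha
        have h1 : a ∈ hV.toFinset := (Set.Finite.mem_toFinset hV).mpr ha
        rw [← heq] at h1
        exact (Set.Finite.mem_toFinset _).mp h1
    refine reducible_of_comp hsV hW1 hW2 htne g f ?_
    rw [hf, hW3]
    rfl
end
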